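/- Let M be a module over C_n ⋊ ℂS_n. Then the following operators on ℂ[y_1,…,y_n] ⊗ M define a representation of H^c_{A_{n−1}}(u) (namely the induced module from the subalgebra generated by C_n ⋊ ℂS_n and x_1,…,x_n, with each x_i acting on M by zero): each y_i acts by multiplication by y_i in the first factor; w ∈ S_n acts by w·(f ⊗ m) = f^w ⊗ wm; c_i acts by c_i·(f ⊗ m) = f ⊗ c_i m; and x_i acts by the Dunkl operator x_i·(f ⊗ m) = u·Σ_{k≠i} g_k ⊗ (1 + c_k c_i)s_{ki} m, where g_k ∈ ℂ[y_1,…,y_n] is the unique polynomial with (y_i − y_k)·g_k = f − f^{s_{ki}}, and f^{s_{ki}} is f with y_i and y_k interchanged. -/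

import Mathlib

noncomputable section

abbrev SignFn (n : ℕ) := Fin n → ℤˣ

/-- The permutation action on sign functions. -/
def permAut (n : ℕ) : Equiv.Perm (Fin n) →* MulAut (SignFn n) where
  toFun σ :=
    { toFun := fun f => f ∘ σ.symm
      invFun := fun f => f ∘ σ
      left_inv := fun f => by ext k; simp
      right_inv := fun f => by ext k; simp
      map_mul' := fun f g => rfl }
  map_one' := by ext f k; rfl
  map_mul' := fun σ τ => by
    ext f k
    show (f ((σ * τ).symm k) : ℤ) = f (τ.symm (σ.symm k))
    rw [Equiv.Perm.mul_def, Equiv.symm_trans_apply]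

/-- The hyperoctahedral group `W_{B_n}` of signed permutations, as a semidirect product. -/
abbrev WB (n : ℕ) := SignFn n ⋊[permAut n] Equiv.Perm (Fin n)

/-- the transposition `s_{ij}` in `W_{B_n}`. -/
def sB {n : ℕ} (i j : Fin n) : WB n := ⟨1, Equiv.swap i j⟩

/-- the transposition with sign changes `s̄_{ij}` in `W_{B_n}`. -/
def sbarB {n : ℕ} (i j : Fin n) : WB n :=
  ⟨fun k => if k = i ∨ k = j then -1 else 1, Equiv.swap i j⟩

/-- the sign change `τ_i` at `i` in `W_{B_n}`. -/
def tauB {n : ℕ} (i : Fin n) : WB n := ⟨fun k => if k = i then -1 else 1, 1⟩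

/-- The signed-permutation action of `w ∈ W_{B_n}` on a basis vector `e_i`:
`w(e_i) = (sign) • e_{(index)}`; we record the pair (sign, index). -/
def actB {n : ℕ} (w : WB n) (i : Fin n) : ℂ × Fin n :=
  (((w.left (w.right i) : ℤ) : ℂ), w.right i)

/-- `W_{D_n}` as the subgroup of even signed permutations inside `W_{B_n}`. -/
def WDsub (n : ℕ) : Subgroup (WB n) where
  carrier := {w | ∏ k, w.left k = 1}
  one_mem' := by simp
  mul_mem' := by
    intro a b ha hb
    simp only [Set.mem_setOf_eq] at *
    have h1 : (a * b).left = a.left * (permAut n a.right) b.left := rfl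
    rw [h1]
    rw [show (∏ k, (a.left * (permAut n a.right) b.left) k) = (∏ k, a.left k) * ∏ k, (permAut n a.right) b.left k from Finset.prod_mul_distrib, ha, one_mul]
    calc ∏ k, (permAut n a.right) b.left k = ∏ k, b.left (a.right.symm k) := rfl
      _ = ∏ k, b.left k := Equiv.prod_comp a.right.symm b.left
      _ = 1 := hb
  inv_mem' := by
    intro a ha
    simp only [Set.mem_setOf_eq] at *
    have h1 : (a⁻¹).left = (permAut n a.right⁻¹) a.left⁻¹ := rfl
    rw [h1]
    calc ∏ k, (permAut n a.right⁻¹) a.left⁻¹ k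
        = ∏ k, a.left⁻¹ ((a.right⁻¹).symm k) := rfl
      _ = ∏ k, (a.left k)⁻¹ := Equiv.prod_comp _ _
      _ = (∏ k, a.left k)⁻¹ := by rw [← Finset.prod_inv_distrib]
      _ = 1 := by rw [ha]; simp

lemma sB_mem {n : ℕ} (i j : Fin n) : sB i j ∈ WDsub n := by
  simp [WDsub, sB]

lemma sbarB_mem {n : ℕ} {i j : Fin n} (h : i ≠ j) : sbarB i j ∈ WDsub n := by
  show ∏ k, (if k = i ∨ k = j then (-1 : ℤˣ) else 1) = 1
  have step : ∀ k, (if k = i ∨ k = j then (-1 : ℤˣ) else 1)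
      = (if k = i then -1 else 1) * (if k = j then -1 else 1) := by
    intro k
    by_cases h1 : k = i <;> by_cases h2 : k = j <;> simp_all
  simp_rw [step, Finset.prod_mul_distrib, Finset.prod_ite_eq', Finset.mem_univ, if_true]
  norm_num

/-- the transposition `s_{ij}` as an element of `W_{D_n}`. -/
def sD {n : ℕ} (i j : Fin n) : WDsub n := ⟨sB i j, sB_mem i j⟩

/-- the transposition with sign changes `s̄_{ij}` as an element of `W_{D_n}` (junk value `1`
when `i = j`). -/
def sbarD {n : ℕ} (i j : Fin n) : WDsub n :=
  if h : i = j then 1 else ⟨sbarB i j, sbarB_mem h⟩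

/-- The signed-permutation action for `W_{D_n}`. -/
def actD {n : ℕ} (w : WDsub n) (i : Fin n) : ℂ × Fin n := actB w.1 i

/-- The (trivially signed) permutation action of `S_n`. -/
def actA (n : ℕ) (σ : Equiv.Perm (Fin n)) (i : Fin n) : ℂ × Fin n := (1, σ i)

/-- Generators of a rational double affine Hecke-Clifford algebra:
`x_i`, `y_i`, Clifford generators `c_i`, and group elements `w ∈ W`. -/
inductive HGen (n : ℕ) (G : Type) : Type
  | x : Fin n → HGen n G
  | y : Fin n → HGen n G
  | c : Fin n → HGen n G
  | g : G → HGen n G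

/-- The free algebra on the generators. -/
abbrev HF (n : ℕ) (G : Type) := FreeAlgebra ℂ (HGen n G)

def hX {n : ℕ} {G : Type} (i : Fin n) : HF n G := FreeAlgebra.ι ℂ (HGen.x i)
def hY {n : ℕ} {G : Type} (i : Fin n) : HF n G := FreeAlgebra.ι ℂ (HGen.y i)
def hC {n : ℕ} {G : Type} (i : Fin n) : HF n G := FreeAlgebra.ι ℂ (HGen.c i)
def hG {n : ℕ} {G : Type} (w : G) : HF n G := FreeAlgebra.ι ℂ (HGen.g w)

/-- The defining relations of a rational double affine Hecke-Clifford algebra, where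
`act w i = (sign, index)` records the (signed) permutation action `w(e_i) = sign • e_index`
of the group `W` on the basis vectors, and `R j i` is the prescribed value of the
commutator `[y_j, x_i]`. -/
inductive HRel (n : ℕ) (G : Type) [Group G] (act : G → Fin n → ℂ × Fin n)
    (R : Fin n → Fin n → HF n G) : HF n G → HF n G → Prop
  | cc (i : Fin n) : HRel n G act R (hC i * hC i) 1
  | canti {i j : Fin n} (h : i ≠ j) : HRel n G act R (hC i * hC j) (-(hC j * hC i))
  | xx (i j : Fin n) : HRel n G act R (hX i * hX j) (hX j * hX i)
  | yy (i j : Fin n) : HRel n G act R (hY i * hY j) (hY j * hY i)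
  | yc (i j : Fin n) : HRel n G act R (hY i * hC j) (hC j * hY i)
  | xcs (i : Fin n) : HRel n G act R (hX i * hC i) (-(hC i * hX i))
  | xc {i j : Fin n} (h : i ≠ j) : HRel n G act R (hX i * hC j) (hC j * hX i)
  | gone : HRel n G act R (hG (1 : G)) 1
  | gmul (w w' : G) : HRel n G act R (hG w * hG w') (hG (w * w'))
  | gx (w : G) (i : Fin n) :
      HRel n G act R (hG w * hX i) ((act w i).1 • (hX (act w i).2 * hG w))
  | gy (w : G) (i : Fin n) :
      HRel n G act R (hG w * hY i) ((act w i).1 • (hY (act w i).2 * hG w))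
  | gc (w : G) (i : Fin n) :
      HRel n G act R (hG w * hC i) ((act w i).1 • (hC (act w i).2 * hG w))
  | yx (j i : Fin n) : HRel n G act R (hY j * hX i) (hX i * hY j + R j i)

/-- A rational double affine Hecke-Clifford algebra, presented by generators and relations. -/
abbrev DaHCa (n : ℕ) (G : Type) [Group G] (act : G → Fin n → ℂ × Fin n)
    (R : Fin n → Fin n → HF n G) := RingQuot (HRel n G act R)

variable {n : ℕ} {G : Type} [Group G] {act : G → Fin n → ℂ × Fin n}
  {R : Fin n → Fin n → HF n G}

def dX (act : G → Fin n → ℂ × Fin n) (R : Fin n → Fin n → HF n G) (i : Fin n) :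
    DaHCa n G act R := RingQuot.mkAlgHom ℂ (HRel n G act R) (hX i)
def dY (act : G → Fin n → ℂ × Fin n) (R : Fin n → Fin n → HF n G) (i : Fin n) :
    DaHCa n G act R := RingQuot.mkAlgHom ℂ (HRel n G act R) (hY i)
def dC (act : G → Fin n → ℂ × Fin n) (R : Fin n → Fin n → HF n G) (i : Fin n) :
    DaHCa n G act R := RingQuot.mkAlgHom ℂ (HRel n G act R) (hC i)
def dG (act : G → Fin n → ℂ × Fin n) (R : Fin n → Fin n → HF n G) (w : G) :
    DaHCa n G act R := RingQuot.mkAlgHom ℂ (HRel n G act R) (hG w)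

/-- The right-hand side of the commutation relations `[y_j, x_i]` in the rational
DaHCa of type `A_{n-1}`:  `[y_j,x_i] = u(1+c_j c_i)s_{ji}` for `i ≠ j` and
`[y_i,x_i] = -u Σ_{k≠i} (1+c_k c_i)s_{ki}`. -/
def RA (n : ℕ) (u : ℂ) (j i : Fin n) : HF n (Equiv.Perm (Fin n)) :=
  if j = i then
    -(u • ∑ k ∈ Finset.univ.erase i, (1 + hC k * hC i) * hG (Equiv.swap k i))
  else
    u • ((1 + hC j * hC i) * hG (Equiv.swap j i))

/-- The rational double affine Hecke-Clifford algebra of type `A_{n-1}`. -/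
abbrev HCA (n : ℕ) (u : ℂ) := DaHCa n (Equiv.Perm (Fin n)) (actA n) (RA n u)

def xA {n : ℕ} {u : ℂ} (i : Fin n) : HCA n u := dX (actA n) (RA n u) i
def yA {n : ℕ} {u : ℂ} (i : Fin n) : HCA n u := dY (actA n) (RA n u) i
def cA {n : ℕ} {u : ℂ} (i : Fin n) : HCA n u := dC (actA n) (RA n u) i
def gA {n : ℕ} {u : ℂ} (w : Equiv.Perm (Fin n)) : HCA n u := dG (actA n) (RA n u) w

/-- Generators of the smash product `C_n ⋊ ℂW`: Clifford generators `c_i` and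
group elements `w ∈ W`. -/
inductive KGen (n : ℕ) (G : Type) : Type
  | c : Fin n → KGen n G
  | g : G → KGen n G

abbrev KF (n : ℕ) (G : Type) := FreeAlgebra ℂ (KGen n G)

def kfC {n : ℕ} {G : Type} (i : Fin n) : KF n G := FreeAlgebra.ι ℂ (KGen.c i)
def kfG {n : ℕ} {G : Type} (w : G) : KF n G := FreeAlgebra.ι ℂ (KGen.g w)

/-- The defining relations of the smash product `C_n ⋊ ℂW`: the Clifford relations,
the group algebra relations, and `w c_i w^{-1} = w(c_i)` where `w(c_i)` is given by the
(signed) permutation action `act`. -/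
inductive KRel (n : ℕ) (G : Type) [Group G] (act : G → Fin n → ℂ × Fin n) :
    KF n G → KF n G → Prop
  | cc (i : Fin n) : KRel n G act (kfC i * kfC i) 1
  | canti {i j : Fin n} (h : i ≠ j) : KRel n G act (kfC i * kfC j) (-(kfC j * kfC i))
  | gone : KRel n G act (kfG (1 : G)) 1
  | gmul (w w' : G) : KRel n G act (kfG w * kfG w') (kfG (w * w'))
  | gc (w : G) (i : Fin n) :
      KRel n G act (kfG w * kfC i) ((act w i).1 • (kfC (act w i).2 * kfG w))

/-- The smash product `C_n ⋊ ℂW`, presented by generators and relations. -/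
abbrev Smash (n : ℕ) (G : Type) [Group G] (act : G → Fin n → ℂ × Fin n) :=
  RingQuot (KRel n G act)

def kC {n : ℕ} {G : Type} [Group G] (act : G → Fin n → ℂ × Fin n) (i : Fin n) :
    Smash n G act := RingQuot.mkAlgHom ℂ (KRel n G act) (kfC i)
def kG {n : ℕ} {G : Type} [Group G] (act : G → Fin n → ℂ × Fin n) (w : G) :
    Smash n G act := RingQuot.mkAlgHom ℂ (KRel n G act) (kfG w)

open scoped TensorProduct

/-!
The divided difference `Δ_{ki} f = (f - f^{s_{ki}}) / (y_i - y_k)` is a polynomial since `f` and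
`f^{s_{ki}}` agree modulo `y_i - y_k`. Its twisted Leibniz rule
`Δ(fg) = Δ(f) g + f^{s_{ki}} Δ(g)`, with `Δ_{ki}(y_j) = δ_{ji} - δ_{jk}`, gives the relation for
`[y_j, x_i]`; the relations of `x_i` with the `c_j` and with `S_n` hold because
`(1 + c_k c_i) s_{ki}` anticommutes with `c_i` and commutes with the other `c_j`, and because `Δ`
is `S_n`-equivariant. For `[x_i, x_j] = 0`, the Jacobi identity
`[y_l, [x_i, x_j]] = [[y_l, x_i], x_j] - [[y_l, x_j], x_i]` and a direct computation show that
`[x_i, x_j]` commutes with every `y_l`; as it kills `1 ⊗ M`, which generates `ℂ[y] ⊗ M` under the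
`y_l`, it is zero.
-/

theorem mul_mul_eq_of_commute_of_anticomm {A : Type*} [Ring A] {a b x : A} (ha : Commute a x)
    (hb : x * b = -(b * x)) (hab : a * b = -(b * a)) : a * b * x = x * (b * a) := by
  rw [mul_assoc, neg_eq_iff_eq_neg.1 hb.symm, mul_neg, ← mul_assoc, ha.eq, mul_assoc, hab, mul_neg,
    neg_neg]

namespace MvPolynomial

section DividedDifference

variable {R σ : Type*} [CommRing R] [DecidableEq σ]

theorem X_sub_X_dvd_sub_rename_swap (i k : σ) (f : MvPolynomial σ R) :
    X i - X k ∣ f - rename (Equiv.swap k i) f := by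
  rw [← Ideal.mem_span_singleton, ← Ideal.Quotient.eq]
  set I := Ideal.span {(X i - X k : MvPolynomial σ R)}
  have hik : Ideal.Quotient.mk I (X i) = Ideal.Quotient.mk I (X k) :=
    Ideal.Quotient.eq.2 (Ideal.subset_span rfl)
  have : (Ideal.Quotient.mkₐ R I).comp (rename (Equiv.swap k i)) = Ideal.Quotient.mkₐ R I := by
    refine algHom_ext fun j => ?_
    simp only [AlgHom.comp_apply, rename_X, Ideal.Quotient.mkₐ_eq_mk, Equiv.swap_apply_def]
    split_ifs with hjk hji
    · rw [hjk, hik]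
    · rw [hji, hik]
    · rfl
  exact (DFunLike.congr_fun this f).symm

variable [IsDomain R]

omit [DecidableEq σ] in
theorem X_sub_X_ne_zero {i k : σ} (h : k ≠ i) : (X i - X k : MvPolynomial σ R) ≠ 0 :=
  sub_ne_zero.2 (X_injective.ne h.symm)

/-- The divided difference `(f - f^{s_{ki}}) / (X i - X k)`, with junk value `0` when `k = i`. -/
noncomputable def divDiff (k i : σ) : MvPolynomial σ R →ₗ[R] MvPolynomial σ R :=
  if h : k = i then 0 else
    (LinearEquiv.ofInjective (LinearMap.mulLeft R (X i - X k))
        (mul_right_injective₀ (X_sub_X_ne_zero h))).symm.toLinearMap ∘ₗ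
      LinearMap.codRestrict _ (LinearMap.id - (rename (Equiv.swap k i)).toLinearMap)
        fun f => (X_sub_X_dvd_sub_rename_swap i k f).imp fun _ hg => by simpa using hg.symm

variable {k i : σ}

theorem X_sub_X_mul_divDiff (h : k ≠ i) (f : MvPolynomial σ R) :
    (X i - X k) * divDiff k i f = f - rename (Equiv.swap k i) f := by
  rw [divDiff, dif_neg h]
  exact LinearEquiv.ofInjective_symm_apply (f := LinearMap.mulLeft R (X i - X k))
    (h := mul_right_injective₀ (X_sub_X_ne_zero h)) (LinearMap.codRestrict _ _ _ f)

theorem divDiff_eq_of_X_sub_X_mul_eq (h : k ≠ i) {f g : MvPolynomial σ R}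
    (hg : (X i - X k) * g = f - rename (Equiv.swap k i) f) : divDiff k i f = g :=
  mul_left_cancel₀ (X_sub_X_ne_zero h) ((X_sub_X_mul_divDiff h f).trans hg.symm)

theorem existsUnique_X_sub_X_mul_eq (h : k ≠ i) (f : MvPolynomial σ R) :
    ∃! g, (X i - X k) * g = f - rename (Equiv.swap k i) f :=
  ⟨divDiff k i f, X_sub_X_mul_divDiff h f, fun _ hg => (divDiff_eq_of_X_sub_X_mul_eq h hg).symm⟩

theorem divDiff_one (h : k ≠ i) : divDiff k i (1 : MvPolynomial σ R) = 0 :=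
  divDiff_eq_of_X_sub_X_mul_eq h (by simp)

theorem divDiff_X_right (h : k ≠ i) : divDiff k i (X i : MvPolynomial σ R) = 1 :=
  divDiff_eq_of_X_sub_X_mul_eq h (by simp)

theorem divDiff_X_left (h : k ≠ i) : divDiff k i (X k : MvPolynomial σ R) = -1 :=
  divDiff_eq_of_X_sub_X_mul_eq h (by simp)

theorem divDiff_X_of_ne {j : σ} (h : k ≠ i) (hjk : j ≠ k) (hji : j ≠ i) :
    divDiff k i (X j : MvPolynomial σ R) = 0 :=
  divDiff_eq_of_X_sub_X_mul_eq h (by simp [Equiv.swap_apply_of_ne_of_ne hjk hji])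

theorem divDiff_mul (h : k ≠ i) (f g : MvPolynomial σ R) :
    divDiff k i (f * g) = divDiff k i f * g + rename (Equiv.swap k i) f * divDiff k i g := by
  refine divDiff_eq_of_X_sub_X_mul_eq h ?_
  rw [map_mul]
  linear_combination
    g * X_sub_X_mul_divDiff h f + rename (Equiv.swap k i) f * X_sub_X_mul_divDiff h g

theorem divDiff_X_mul (h : k ≠ i) (j : σ) (f : MvPolynomial σ R) :
    divDiff k i (X j * f)
      = X j * divDiff k i f + divDiff k i (X j) * rename (Equiv.swap k i) f := by
  rw [mul_comm, divDiff_mul h, mul_comm, mul_comm (rename _ f)]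

theorem rename_divDiff (h : k ≠ i) (w : Equiv.Perm σ) (f : MvPolynomial σ R) :
    rename w (divDiff k i f) = divDiff (w k) (w i) (rename w f) := by
  refine (divDiff_eq_of_X_sub_X_mul_eq (w.injective.ne h) ?_).symm
  rw [← rename_X w i, ← rename_X w k, ← map_sub, ← map_mul, X_sub_X_mul_divDiff h, map_sub,
    rename_rename, rename_rename, ← Equiv.coe_trans, ← Equiv.coe_trans]
  congr 4
  ext x
  simp [Equiv.swap_apply_apply]

end DividedDifference

section TensorProduct

variable {R σ M : Type*} [CommSemiring R] [AddCommMonoid M] [Module R M]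

theorem eq_zero_of_commute_rTensor_mulLeft_X {D : Module.End R (MvPolynomial σ R ⊗[R] M)}
    (hD : ∀ l, Commute D ((LinearMap.mulLeft R (X l)).rTensor M))
    (h1 : ∀ m, D (1 ⊗ₜ m) = 0) : D = 0 := by
  refine TensorProduct.ext' fun f m => ?_
  rw [LinearMap.zero_apply]
  induction f using MvPolynomial.induction_on generalizing m with
  | C a => rw [C_eq_smul_one, TensorProduct.smul_tmul, h1]
  | add p q hp hq => rw [TensorProduct.add_tmul, map_add, hp, hq, add_zero]
  | mul_X p l hp =>
    have hpX : (p * X l) ⊗ₜ[R] m = (LinearMap.mulLeft R (X l)).rTensor M (p ⊗ₜ m) := by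
      rw [LinearMap.rTensor_tmul, LinearMap.mulLeft_apply, mul_comm]
    rw [hpX, ← Module.End.mul_apply, (hD l).eq, Module.End.mul_apply, hp, map_zero]

end TensorProduct

end MvPolynomial

open MvPolynomial (X rename divDiff)

local notation "𝒦[" n "]" => Smash n (Equiv.Perm (Fin n)) (actA n)
local notation "𝒫[" n "]" => MvPolynomial (Fin n) ℂ

section Presentations

theorem kC_mul_self (i : Fin n) : kC act i * kC act i = 1 := by
  simpa [kC] using RingQuot.mkAlgHom_rel ℂ (KRel.cc (act := act) i)

theorem kC_mul_kC_of_ne {i j : Fin n} (h : i ≠ j) :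
    kC act i * kC act j = -(kC act j * kC act i) := by
  simpa [kC] using RingQuot.mkAlgHom_rel ℂ (KRel.canti (act := act) h)

theorem kC_mul_kC_mul_kC {i j : Fin n} (h : i ≠ j) :
    kC act i * kC act j * kC act i = -kC act j := by
  -- `neg_mul`/`mul_neg` are given explicit arguments: their patterns do not unify with the `Neg`
  -- instance of `RingQuot`
  rw [kC_mul_kC_of_ne h, neg_mul (kC act j * kC act i), mul_assoc, kC_mul_self, mul_one]

theorem kG_one : kG act (1 : G) = 1 := by
  simpa [kG] using RingQuot.mkAlgHom_rel ℂ (KRel.gone (act := act))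

theorem kG_mul (w w' : G) : kG act w * kG act w' = kG act (w * w') := by
  simpa [kG] using RingQuot.mkAlgHom_rel ℂ (KRel.gmul (act := act) w w')

theorem kG_mul_kC (w : Equiv.Perm (Fin n)) (i : Fin n) :
    kG (actA n) w * kC (actA n) i = kC (actA n) (w i) * kG (actA n) w := by
  simpa [kG, kC, actA] using RingQuot.mkAlgHom_rel ℂ (KRel.gc (act := actA n) w i)

def DaHCa.lift {A : Type*} [Semiring A] [Algebra ℂ A] (f : HGen n G → A)
    (hf : ∀ ⦃a b⦄, HRel n G act R a b → FreeAlgebra.lift ℂ f a = FreeAlgebra.lift ℂ f b) :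
    DaHCa n G act R →ₐ[ℂ] A :=
  RingQuot.liftAlgHom ℂ ⟨FreeAlgebra.lift ℂ f, hf⟩

theorem DaHCa.lift_mkAlgHom_ι {A : Type*} [Semiring A] [Algebra ℂ A] (f : HGen n G → A)
    (hf : ∀ ⦃a b⦄, HRel n G act R a b → FreeAlgebra.lift ℂ f a = FreeAlgebra.lift ℂ f b)
    (x : HGen n G) :
    DaHCa.lift f hf (RingQuot.mkAlgHom ℂ (HRel n G act R) (FreeAlgebra.ι ℂ x)) = f x := by
  rw [DaHCa.lift, RingQuot.liftAlgHom_mkAlgHom_apply, FreeAlgebra.lift_ι_apply]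

end Presentations

section CliffordSwap

def cliffordSwap (k i : Fin n) : 𝒦[n] :=
  (1 + kC (actA n) k * kC (actA n) i) * kG (actA n) (Equiv.swap k i)

theorem cliffordSwap_mul_kC_right {k i : Fin n} (h : k ≠ i) :
    cliffordSwap k i * kC (actA n) i = -(kC (actA n) i * cliffordSwap k i) := by
  have hl : cliffordSwap k i * kC (actA n) i
      = (kC (actA n) k - kC (actA n) i) * kG (actA n) (Equiv.swap k i) := by
    rw [cliffordSwap, mul_assoc, kG_mul_kC, Equiv.swap_apply_right, ← mul_assoc, add_mul,
      one_mul, kC_mul_kC_mul_kC h, sub_eq_add_neg]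
  have hr : kC (actA n) i * cliffordSwap k i
      = (kC (actA n) i - kC (actA n) k) * kG (actA n) (Equiv.swap k i) := by
    rw [cliffordSwap, ← mul_assoc, mul_add, mul_one, ← mul_assoc, kC_mul_kC_mul_kC h.symm,
      sub_eq_add_neg]
  rw [hl, hr, ← neg_sub (kC (actA n) k), neg_mul (kC (actA n) k - kC (actA n) i)]
  exact (neg_neg _).symm

theorem cliffordSwap_mul_kC_of_ne {k i j : Fin n} (hji : j ≠ i) :
    cliffordSwap k i * kC (actA n) j = kC (actA n) j * cliffordSwap k i := by
  rcases eq_or_ne j k with rfl | hjk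
  · rw [cliffordSwap, mul_assoc, kG_mul_kC, Equiv.swap_apply_left, ← mul_assoc, add_mul, one_mul,
      mul_assoc, kC_mul_self, mul_one, ← mul_assoc, mul_add, mul_one, ← mul_assoc, kC_mul_self,
      one_mul, add_comm]
  · have hc : kC (actA n) k * kC (actA n) i * kC (actA n) j
        = kC (actA n) j * (kC (actA n) k * kC (actA n) i) := by
      rw [mul_assoc, kC_mul_kC_of_ne hji.symm, mul_neg (kC (actA n) k), ← mul_assoc,
        kC_mul_kC_of_ne hjk.symm, neg_mul (kC (actA n) j * kC (actA n) k), neg_neg, mul_assoc]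
    rw [cliffordSwap, mul_assoc, kG_mul_kC, Equiv.swap_apply_of_ne_of_ne hjk hji, ← mul_assoc,
      add_mul, one_mul, hc, ← mul_one_add, mul_assoc]

theorem kG_mul_cliffordSwap (w : Equiv.Perm (Fin n)) (k i : Fin n) :
    kG (actA n) w * cliffordSwap k i = cliffordSwap (w k) (w i) * kG (actA n) w := by
  have hswap : Equiv.swap (w k) (w i) * w = w * Equiv.swap k i := by
    rw [Equiv.swap_apply_apply]
    group
  rw [cliffordSwap, cliffordSwap, ← mul_assoc, mul_add, mul_one, ← mul_assoc, kG_mul_kC,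
    mul_assoc (kC (actA n) (w k)), kG_mul_kC, ← mul_assoc, add_mul, add_mul, add_mul, one_mul]
  simp only [mul_assoc, kG_mul, hswap]

end CliffordSwap

section DunklOperators

variable (u : ℂ) (M : Type) [AddCommGroup M] [Module ℂ M]

def yOp (i : Fin n) : Module.End ℂ (𝒫[n] ⊗[ℂ] M) := (LinearMap.mulLeft ℂ (X i)).rTensor M

@[simp] theorem yOp_tmul (i : Fin n) (f : 𝒫[n]) (m : M) : yOp M i (f ⊗ₜ m) = (X i * f) ⊗ₜ m :=
  rfl

variable [Module 𝒦[n] M] [IsScalarTower ℂ 𝒦[n] M]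

def cOp (i : Fin n) : Module.End ℂ (𝒫[n] ⊗[ℂ] M) :=
  (Algebra.lsmul ℂ ℂ M (kC (actA n) i)).lTensor 𝒫[n]

def wOp (w : Equiv.Perm (Fin n)) : Module.End ℂ (𝒫[n] ⊗[ℂ] M) :=
  TensorProduct.map (rename w).toLinearMap (Algebra.lsmul ℂ ℂ M (kG (actA n) w))

def dunklOp (i : Fin n) : Module.End ℂ (𝒫[n] ⊗[ℂ] M) :=
  u • ∑ k ∈ Finset.univ.erase i,
    TensorProduct.map (divDiff k i) (Algebra.lsmul ℂ ℂ M (cliffordSwap k i))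

def cliffordSwapOp (k i : Fin n) : Module.End ℂ (𝒫[n] ⊗[ℂ] M) :=
  (1 + cOp M k * cOp M i) * wOp M (Equiv.swap k i)

def yxBracketOp (j i : Fin n) : Module.End ℂ (𝒫[n] ⊗[ℂ] M) :=
  if j = i then (-u) • ∑ k ∈ Finset.univ.erase i, cliffordSwapOp M k i
  else u • cliffordSwapOp M j i

variable {M}

@[simp] theorem cOp_tmul (i : Fin n) (f : 𝒫[n]) (m : M) :
    cOp M i (f ⊗ₜ m) = f ⊗ₜ (kC (actA n) i • m) :=
  rfl

@[simp] theorem wOp_tmul (w : Equiv.Perm (Fin n)) (f : 𝒫[n]) (m : M) :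
    wOp M w (f ⊗ₜ m) = rename w f ⊗ₜ (kG (actA n) w • m) :=
  rfl

theorem dunklOp_tmul (i : Fin n) (f : 𝒫[n]) (m : M) :
    dunklOp u M i (f ⊗ₜ m)
      = u • ∑ k ∈ Finset.univ.erase i, divDiff k i f ⊗ₜ (cliffordSwap k i • m) := by
  simp [dunklOp]

theorem cliffordSwapOp_tmul (k i : Fin n) (f : 𝒫[n]) (m : M) :
    cliffordSwapOp M k i (f ⊗ₜ m) = rename (Equiv.swap k i) f ⊗ₜ (cliffordSwap k i • m) := by
  simp only [cliffordSwapOp, cliffordSwap, Module.End.mul_apply, LinearMap.add_apply,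
    Module.End.one_apply, wOp_tmul, cOp_tmul, add_smul, one_smul, mul_smul, TensorProduct.tmul_add]

theorem yxBracketOp_tmul (j i : Fin n) (f : 𝒫[n]) (m : M) :
    yxBracketOp u M j i (f ⊗ₜ m) = u • ∑ k ∈ Finset.univ.erase i,
      (-divDiff k i (X j) * rename (Equiv.swap k i) f) ⊗ₜ (cliffordSwap k i • m) := by
  rcases eq_or_ne j i with rfl | hji
  · rw [yxBracketOp, if_pos rfl, LinearMap.smul_apply, LinearMap.sum_apply, neg_smul, ← smul_neg,
      ← Finset.sum_neg_distrib]
    refine congrArg (u • ·) (Finset.sum_congr rfl fun k hk => ?_)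
    rw [cliffordSwapOp_tmul, MvPolynomial.divDiff_X_right (Finset.ne_of_mem_erase hk), neg_one_mul,
      TensorProduct.neg_tmul]
  · have hj : j ∈ Finset.univ.erase i := Finset.mem_erase.2 ⟨hji, Finset.mem_univ j⟩
    rw [Finset.sum_eq_single_of_mem j hj fun k hk hkj => ?_]
    · rw [yxBracketOp, if_neg hji, LinearMap.smul_apply, cliffordSwapOp_tmul,
        MvPolynomial.divDiff_X_left hji, neg_neg, one_mul]
    · rw [MvPolynomial.divDiff_X_of_ne (Finset.ne_of_mem_erase hk) hkj.symm hji, neg_zero,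
        zero_mul, TensorProduct.zero_tmul]

theorem dunklOp_one_tmul (i : Fin n) (m : M) : dunklOp u M i (1 ⊗ₜ m) = 0 := by
  rw [dunklOp_tmul, Finset.sum_eq_zero fun k hk => ?_, smul_zero]
  rw [MvPolynomial.divDiff_one (Finset.ne_of_mem_erase hk), TensorProduct.zero_tmul]

theorem yOp_mul_dunklOp (j i : Fin n) :
    yOp M j * dunklOp u M i = dunklOp u M i * yOp M j + yxBracketOp u M j i := by
  refine TensorProduct.ext' fun f m => ?_
  simp only [LinearMap.add_apply, Module.End.mul_apply, yOp_tmul, dunklOp_tmul, yxBracketOp_tmul,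
    map_smul, map_sum, ← smul_add, ← Finset.sum_add_distrib, ← TensorProduct.add_tmul]
  refine congrArg (u • ·) (Finset.sum_congr rfl fun k hk => ?_)
  rw [MvPolynomial.divDiff_X_mul (Finset.ne_of_mem_erase hk)]
  congr 1
  ring

theorem cOp_mul_cOp_of_ne {i j : Fin n} (h : i ≠ j) :
    cOp M i * cOp M j = -(cOp M j * cOp M i) := by
  refine TensorProduct.ext' fun f m => ?_
  simp only [Module.End.mul_apply, LinearMap.neg_apply, cOp_tmul, ← mul_smul, kC_mul_kC_of_ne h,
    neg_smul, TensorProduct.tmul_neg]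

theorem dunklOp_mul_cOp_self (i : Fin n) :
    dunklOp u M i * cOp M i = -(cOp M i * dunklOp u M i) := by
  refine eq_neg_of_add_eq_zero_left (a := dunklOp u M i * cOp M i) ?_
  refine TensorProduct.ext' fun f m => ?_
  simp only [LinearMap.add_apply, Module.End.mul_apply, cOp_tmul, dunklOp_tmul, map_smul, map_sum,
    ← mul_smul, ← smul_add, ← Finset.sum_add_distrib, ← TensorProduct.tmul_add, ← add_smul,
    LinearMap.zero_apply]
  rw [Finset.sum_eq_zero fun k hk => ?_, smul_zero]
  rw [cliffordSwap_mul_kC_right (Finset.ne_of_mem_erase hk), neg_add_cancel, zero_smul,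
    TensorProduct.tmul_zero]

theorem dunklOp_mul_cOp_of_ne {i j : Fin n} (h : j ≠ i) :
    dunklOp u M i * cOp M j = cOp M j * dunklOp u M i := by
  refine TensorProduct.ext' fun f m => ?_
  simp only [Module.End.mul_apply, cOp_tmul, dunklOp_tmul, map_smul, map_sum, ← mul_smul,
    cliffordSwap_mul_kC_of_ne h]

theorem wOp_mul_dunklOp (w : Equiv.Perm (Fin n)) (i : Fin n) :
    wOp M w * dunklOp u M i = dunklOp u M (w i) * wOp M w := by
  refine TensorProduct.ext' fun f m => ?_
  simp only [Module.End.mul_apply, wOp_tmul, dunklOp_tmul, map_smul, map_sum, ← mul_smul]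
  refine congrArg (u • ·) (Finset.sum_equiv w (by simp) fun k hk => ?_)
  rw [MvPolynomial.rename_divDiff (Finset.ne_of_mem_erase hk), kG_mul_cliffordSwap]

theorem commute_cOp_dunklOp {i j : Fin n} (h : j ≠ i) : Commute (cOp M j) (dunklOp u M i) :=
  (dunklOp_mul_cOp_of_ne u h).symm

theorem commute_wOp_dunklOp {w : Equiv.Perm (Fin n)} {i : Fin n} (h : w i = i) :
    Commute (wOp M w) (dunklOp u M i) := by
  have hw := wOp_mul_dunklOp (M := M) u w i
  rwa [h] at hw

theorem commute_cliffordSwapOp_dunklOp {k i j : Fin n} (hjk : j ≠ k) (hji : j ≠ i) :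
    Commute (cliffordSwapOp M k i) (dunklOp u M j) :=
  ((Commute.one_left _).add_left ((commute_cOp_dunklOp u hjk.symm).mul_left
    (commute_cOp_dunklOp u hji.symm))).mul_left
    (commute_wOp_dunklOp u (Equiv.swap_apply_of_ne_of_ne hjk hji))

theorem cliffordSwapOp_mul_dunklOp {k i : Fin n} (h : k ≠ i) :
    cliffordSwapOp M k i * dunklOp u M k = dunklOp u M i * cliffordSwapOp M i k := by
  have hw : wOp M (Equiv.swap k i) * dunklOp u M k = dunklOp u M i * wOp M (Equiv.swap k i) := by
    have hw := wOp_mul_dunklOp (M := M) u (Equiv.swap k i) k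
    rwa [Equiv.swap_apply_left] at hw
  -- proved in an abstract ring, since `HasDistribNeg` is not found on this `Module.End`
  have hc : cOp M k * cOp M i * dunklOp u M i = dunklOp u M i * (cOp M i * cOp M k) :=
    mul_mul_eq_of_commute_of_anticomm (A := Module.End ℂ (𝒫[n] ⊗[ℂ] M))
      (commute_cOp_dunklOp u h) (dunklOp_mul_cOp_self u i) (cOp_mul_cOp_of_ne h)
  rw [cliffordSwapOp, cliffordSwapOp, Equiv.swap_comm i k, mul_assoc, hw, ← mul_assoc, add_mul,
    one_mul, hc, ← mul_one_add, mul_assoc]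

theorem yxBracketOp_dunklOp_jacobi_self {i j : Fin n} (hij : i ≠ j) :
    dunklOp u M i * yxBracketOp u M i j + yxBracketOp u M i i * dunklOp u M j
      = dunklOp u M j * yxBracketOp u M i i + yxBracketOp u M i j * dunklOp u M i := by
  have hj : j ∈ Finset.univ.erase i := Finset.mem_erase.2 ⟨hij.symm, Finset.mem_univ j⟩
  have hsum : ∑ k ∈ Finset.univ.erase i, cliffordSwapOp M k i * dunklOp u M j
      = dunklOp u M i * cliffordSwapOp M i j
        + ∑ k ∈ (Finset.univ.erase i).erase j, dunklOp u M j * cliffordSwapOp M k i := by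
    rw [← Finset.add_sum_erase _ _ hj, cliffordSwapOp_mul_dunklOp u hij.symm]
    refine congrArg _ (Finset.sum_congr rfl fun k hk => ?_)
    exact (commute_cliffordSwapOp_dunklOp u (Finset.ne_of_mem_erase hk).symm hij.symm).eq
  simp only [yxBracketOp, if_neg hij, ↓reduceIte, smul_mul_assoc, mul_smul_comm, Finset.mul_sum,
    Finset.sum_mul, hsum]
  rw [← Finset.add_sum_erase _ _ hj, cliffordSwapOp_mul_dunklOp u hij]
  module

theorem yxBracketOp_dunklOp_jacobi {i j : Fin n} (hij : i ≠ j) (l : Fin n) :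
    dunklOp u M i * yxBracketOp u M l j + yxBracketOp u M l i * dunklOp u M j
      = dunklOp u M j * yxBracketOp u M l i + yxBracketOp u M l j * dunklOp u M i := by
  rcases eq_or_ne l i with rfl | hli
  · exact yxBracketOp_dunklOp_jacobi_self u hij
  rcases eq_or_ne l j with rfl | hlj
  · exact (yxBracketOp_dunklOp_jacobi_self u hij.symm).symm
  rw [yxBracketOp, yxBracketOp, if_neg hli, if_neg hlj, mul_smul_comm, smul_mul_assoc,
    mul_smul_comm, smul_mul_assoc, (commute_cliffordSwapOp_dunklOp u hli.symm hij).eq,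
    (commute_cliffordSwapOp_dunklOp u hlj.symm hij.symm).eq, add_comm]

theorem yOp_mul_dunklOp_mul_dunklOp (l i j : Fin n) :
    yOp M l * (dunklOp u M i * dunklOp u M j)
      = dunklOp u M i * dunklOp u M j * yOp M l
        + (dunklOp u M i * yxBracketOp u M l j + yxBracketOp u M l i * dunklOp u M j) := by
  rw [← mul_assoc, yOp_mul_dunklOp, add_mul, mul_assoc, yOp_mul_dunklOp, mul_add, ← mul_assoc,
    add_assoc]

theorem commute_yOp_dunklOp_commutator {i j : Fin n} (hij : i ≠ j) (l : Fin n) :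
    Commute (yOp M l) (dunklOp u M i * dunklOp u M j - dunklOp u M j * dunklOp u M i) := by
  rw [Commute, SemiconjBy, mul_sub (yOp M l), sub_mul _ _ (yOp M l), yOp_mul_dunklOp_mul_dunklOp,
    yOp_mul_dunklOp_mul_dunklOp, yxBracketOp_dunklOp_jacobi u hij l]
  abel

theorem dunklOp_mul_comm (i j : Fin n) :
    dunklOp u M i * dunklOp u M j = dunklOp u M j * dunklOp u M i := by
  rcases eq_or_ne i j with rfl | hij
  · rfl
  rw [← sub_eq_zero]
  refine MvPolynomial.eq_zero_of_commute_rTensor_mulLeft_X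
    (fun l => (commute_yOp_dunklOp_commutator u hij l).symm) fun m => ?_
  rw [LinearMap.sub_apply, Module.End.mul_apply, Module.End.mul_apply, dunklOp_one_tmul,
    dunklOp_one_tmul, map_zero, map_zero, sub_zero]

end DunklOperators

section DunklRepresentation

variable (u : ℂ) (M : Type) [AddCommGroup M] [Module ℂ M] [Module 𝒦[n] M] [IsScalarTower ℂ 𝒦[n] M]

def dunklGen : HGen n (Equiv.Perm (Fin n)) → Module.End ℂ (𝒫[n] ⊗[ℂ] M)
  | .x i => dunklOp u M i
  | .y i => yOp M i
  | .c i => cOp M i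
  | .g w => wOp M w

theorem lift_dunklGen_RA (j i : Fin n) :
    FreeAlgebra.lift ℂ (dunklGen u M) (RA n u j i) = yxBracketOp u M j i := by
  rcases eq_or_ne j i with rfl | hji
  · simp only [RA, yxBracketOp, ↓reduceIte, map_neg, map_smul, map_sum, map_mul, map_add, map_one,
      hC, hG, FreeAlgebra.lift_ι_apply, dunklGen, cliffordSwapOp]
    exact (neg_smul u (∑ k ∈ Finset.univ.erase j, cliffordSwapOp M k j)).symm
  · simp only [RA, yxBracketOp, hji, ↓reduceIte, map_smul, map_mul, map_add, map_one, hC, hG,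
      FreeAlgebra.lift_ι_apply, dunklGen, cliffordSwapOp]

theorem lift_dunklGen_eq_of_rel ⦃a b : HF n (Equiv.Perm (Fin n))⦄
    (h : HRel n (Equiv.Perm (Fin n)) (actA n) (RA n u) a b) :
    FreeAlgebra.lift ℂ (dunklGen u M) a = FreeAlgebra.lift ℂ (dunklGen u M) b := by
  induction h <;>
    simp only [hX, hY, hC, hG, map_mul, map_neg, map_one, map_add, FreeAlgebra.lift_ι_apply,
      dunklGen, actA, one_smul, lift_dunklGen_RA]
  case cc i => exact TensorProduct.ext' fun f m => by simp [← mul_smul, kC_mul_self]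
  case canti h => exact cOp_mul_cOp_of_ne h
  case xx i j => exact dunklOp_mul_comm u i j
  case yy i j => exact TensorProduct.ext' fun f m => by simp [mul_left_comm]
  case yc i j => exact TensorProduct.ext' fun f m => rfl
  case xcs i => exact dunklOp_mul_cOp_self u i
  case xc h => exact dunklOp_mul_cOp_of_ne u h.symm
  case gone => exact TensorProduct.ext' fun f m => by simp [kG_one]
  case gmul w w' =>
    exact TensorProduct.ext' fun f m => by simp [← mul_smul, kG_mul, MvPolynomial.rename_rename]
  case gx w i => exact wOp_mul_dunklOp u w i
  case gy w i => exact TensorProduct.ext' fun f m => by simp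
  case gc w i => exact TensorProduct.ext' fun f m => by simp [← mul_smul, kG_mul_kC]
  case yx j i => exact yOp_mul_dunklOp u j i

end DunklRepresentation

/-- **Dunkl operator representation of `H^c_{A_{n-1}}(u)` on `ℂ[y] ⊗ M`**
(Khongsap-Wang, Theorem 3.7).  For `M` a module over `C_n ⋊ ℂS_n`, the operators:
`y_i` = multiplication by `y_i`, `w·(f ⊗ m) = f^w ⊗ wm`, `c_i·(f ⊗ m) = f ⊗ c_i m`, and
`x_i` = the Dunkl operator `x_i·(f ⊗ m) = u Σ_{k≠i} ((f - f^{s_{ki}})/(y_i - y_k)) ⊗ (1 + c_k c_i)s_{ki} m`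
define a representation of `H^c_{A_{n-1}}(u)`. -/
theorem dunkl_representation_x_A (n : ℕ) (u : ℂ) (M : Type) [AddCommGroup M] [Module ℂ M]
    [Module (Smash n (Equiv.Perm (Fin n)) (actA n)) M]
    [IsScalarTower ℂ (Smash n (Equiv.Perm (Fin n)) (actA n)) M] :
    (∀ (f : MvPolynomial (Fin n) ℂ) (i k : Fin n), k ≠ i →
      ∃! g : MvPolynomial (Fin n) ℂ,
        (MvPolynomial.X i - MvPolynomial.X k) * g
          = f - MvPolynomial.rename (Equiv.swap k i) f) ∧
    ∃ ρ : HCA n u →ₐ[ℂ] Module.End ℂ (MvPolynomial (Fin n) ℂ ⊗[ℂ] M),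
      (∀ (i : Fin n) (f : MvPolynomial (Fin n) ℂ) (m : M),
        ρ (yA i) (f ⊗ₜ[ℂ] m) = (MvPolynomial.X i * f) ⊗ₜ[ℂ] m) ∧
      (∀ (w : Equiv.Perm (Fin n)) (f : MvPolynomial (Fin n) ℂ) (m : M),
        ρ (gA w) (f ⊗ₜ[ℂ] m)
          = (MvPolynomial.rename w f) ⊗ₜ[ℂ] ((kG (actA n) w) • m)) ∧
      (∀ (i : Fin n) (f : MvPolynomial (Fin n) ℂ) (m : M),
        ρ (cA i) (f ⊗ₜ[ℂ] m) = f ⊗ₜ[ℂ] ((kC (actA n) i) • m)) ∧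
      (∀ (i : Fin n) (f : MvPolynomial (Fin n) ℂ) (g : Fin n → MvPolynomial (Fin n) ℂ)
          (m : M),
        (∀ k, k ≠ i → (MvPolynomial.X i - MvPolynomial.X k) * g k
            = f - MvPolynomial.rename (Equiv.swap k i) f) →
        ρ (xA i) (f ⊗ₜ[ℂ] m)
          = u • ∑ k ∈ Finset.univ.erase i,
              (g k) ⊗ₜ[ℂ]
                ((((1 : Smash n (Equiv.Perm (Fin n)) (actA n))
                    + kC (actA n) k * kC (actA n) i)
                  * kG (actA n) (Equiv.swap k i)) • m)) := by
  have hρ := DaHCa.lift_mkAlgHom_ι (dunklGen (n := n) u M) (lift_dunklGen_eq_of_rel u M)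
  refine ⟨fun f i k hk => MvPolynomial.existsUnique_X_sub_X_mul_eq hk f, DaHCa.lift _ _,
    fun i f m => LinearMap.congr_fun (hρ (.y i)) (f ⊗ₜ m),
    fun w f m => LinearMap.congr_fun (hρ (.g w)) (f ⊗ₜ m),
    fun i f m => LinearMap.congr_fun (hρ (.c i)) (f ⊗ₜ m), fun i f g m hg => ?_⟩
  refine (LinearMap.congr_fun (hρ (.x i)) (f ⊗ₜ m)).trans ?_
  refine (dunklOp_tmul u i f m).trans (congrArg (u • ·) (Finset.sum_congr rfl fun k hk => ?_))
  have hki := Finset.ne_of_mem_erase hk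
  rw [MvPolynomial.divDiff_eq_of_X_sub_X_mul_eq hki (hg k hki), cliffordSwap]

end
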